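/- arXiv:1305.2714 — 2 statements merged into one kernel-verified Lean document; each statement's English description precedes it below -/
import Mathlib

section
/- Let C ⊆ ℝⁿ be a nonempty, closed and convex set, x₀ ∈ C, and let v be a standard Gaussian vector on ℝⁿ. Let prox_C(y) = argmin_{x∈C} ‖y − x‖₂ (the metric projection of y onto C). Then sup_{σ>0} E[‖prox_C(x₀+σv) − x₀‖₂²]/σ² = D(T_C(x₀)*), and the supremum is achieved in the limit σ → 0. -/
open MeasureTheory ProbabilityTheory Filter Topology Metric
open scoped RealInnerProductSpace ENNReal Pointwise

noncomputable section

/-- Standard Gaussian measure on `ℝⁿ` (mean zero, identity covariance). -/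
def stdGaussian (n : ℕ) : Measure (EuclideanSpace ℝ (Fin n)) :=
  Measure.map (⇑(EuclideanSpace.equiv (Fin n) ℝ).symm)
    (Measure.pi fun _ : Fin n => gaussianReal 0 1)

/-- `D(K)`: mean squared distance of a standard Gaussian vector to `K`. -/
def msd (n : ℕ) (K : Set (EuclideanSpace ℝ (Fin n))) : ℝ :=
  ∫ g, (Metric.infDist g K) ^ 2 ∂(stdGaussian n)

variable {E : Type*} [NormedAddCommGroup E] [InnerProductSpace ℝ E]

/-- Subdifferential of `f` at `x₀`. -/
def subdiff (f : E → ℝ) (x₀ : E) : Set E :=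
  {s | ∀ x, f x₀ + ⟪s, x - x₀⟫ ≤ f x}

/-- Cone generated by a set: `{c • x : c ≥ 0, x ∈ A}`. -/
def coneOf (A : Set E) : Set E :=
  {y | ∃ c : ℝ, 0 ≤ c ∧ ∃ x ∈ A, y = c • x}

/-- Set of feasible directions of `C` at `x₀`. -/
def feasible (C : Set E) (x₀ : E) : Set E := {z | x₀ + z ∈ C}

/-- Tangent cone of `C` at `x₀`: the closure of the cone of feasible directions. -/
def tangentConeOf (C : Set E) (x₀ : E) : Set E := closure (coneOf (feasible C x₀))

/-- Polar cone of a set `K`. -/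
def polarCone (K : Set E) : Set E := {v | ∀ x ∈ K, ⟪v, x⟫ ≤ 0}

open Classical in
/-- Metric projection onto `K` (the unique nearest point when `K` is nonempty,
closed and convex). -/
def projSet (K : Set E) (x : E) : E :=
  if h : ∃ y ∈ K, dist x y = Metric.infDist x K then h.choose else x

/-- Matrix-vector multiplication as a map between Euclidean spaces. -/
def matVec {m n : ℕ} (A : Matrix (Fin m) (Fin n) ℝ) (x : EuclideanSpace ℝ (Fin n)) :
    EuclideanSpace ℝ (Fin m) :=
  (EuclideanSpace.equiv (Fin m) ℝ).symm (A.mulVec (EuclideanSpace.equiv (Fin n) ℝ x))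

/-- Statistical dimension of `K`: `E ‖Proj(g,K)‖²` for standard Gaussian `g`. -/
def statDim (n : ℕ) (K : Set (EuclideanSpace ℝ (Fin n))) : ℝ :=
  ∫ g, ‖projSet K g‖ ^ 2 ∂(stdGaussian n)

end

/-!
Write `Q σ w = (P_C(x₀ + σ w) - x₀) / σ`. Testing the variational inequality of the projection at
two noise levels against each other shows that `‖Q σ w‖` is nonincreasing in `σ > 0`. Since
`Q σ w` is a feasible direction and `‖w - Q σ w‖ = dist(x₀ + σ w, C) / σ`, which tends to
`dist(w, T_C(x₀))` as `σ ↓ 0`, the point `Q σ w` converges to the projection of `w` onto the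
tangent cone, whose norm is `dist(w, T_C(x₀)*)` by Moreau's decomposition. So the normalised
error increases pointwise to `dist(w, T_C(x₀)*)²` as `σ ↓ 0`, and dominated convergence, with
`‖Q σ w‖ ≤ ‖w‖` from nonexpansiveness, passes this to the Gaussian expectation.
-/

section Projection

variable {E : Type*} [NormedAddCommGroup E] {S : Set E}

theorem projSet_of_mem {x : E} (hx : x ∈ S) : projSet S x = x := by
  have h : ∃ y ∈ S, dist x y = infDist x S := ⟨x, hx, by rw [dist_self, infDist_zero_of_mem hx]⟩
  rw [projSet, dif_pos h]
  exact (dist_eq_zero.1 (h.choose_spec.2.trans (infDist_zero_of_mem hx))).symm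

variable [InnerProductSpace ℝ E] [CompleteSpace E]

theorem projSet_mem_and_dist_eq (hne : S.Nonempty) (hcl : IsClosed S) (hconv : Convex ℝ S)
    (x : E) : projSet S x ∈ S ∧ dist x (projSet S x) = infDist x S := by
  have h : ∃ y ∈ S, dist x y = infDist x S := by
    obtain ⟨y, hy, hmin⟩ := exists_norm_eq_iInf_of_complete_convex hne hcl.isComplete hconv x
    refine ⟨y, hy, ?_⟩
    simp_rw [dist_eq_norm, hmin, infDist_eq_iInf, dist_eq_norm]
  rw [projSet, dif_pos h]
  exact h.choose_spec

theorem projSet_mem (hne : S.Nonempty) (hcl : IsClosed S) (hconv : Convex ℝ S) (x : E) :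
    projSet S x ∈ S :=
  (projSet_mem_and_dist_eq hne hcl hconv x).1

theorem dist_projSet (hne : S.Nonempty) (hcl : IsClosed S) (hconv : Convex ℝ S) (x : E) :
    dist x (projSet S x) = infDist x S :=
  (projSet_mem_and_dist_eq hne hcl hconv x).2

theorem inner_sub_projSet_nonpos (hne : S.Nonempty) (hcl : IsClosed S) (hconv : Convex ℝ S)
    (x : E) {z : E} (hz : z ∈ S) : ⟪x - projSet S x, z - projSet S x⟫ ≤ 0 := by
  refine (norm_eq_iInf_iff_real_inner_le_zero hconv (projSet_mem hne hcl hconv x)).1 ?_ z hz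
  simp_rw [← dist_eq_norm, dist_projSet hne hcl hconv, infDist_eq_iInf]

theorem norm_projSet_sub_sq_le (hne : S.Nonempty) (hcl : IsClosed S) (hconv : Convex ℝ S)
    (x : E) {q : E} (hq : q ∈ S) :
    ‖projSet S x - q‖ ^ 2 ≤ ‖x - q‖ ^ 2 - infDist x S ^ 2 := by
  set p := projSet S x
  have hvi : ⟪x - p, q - p⟫ ≤ 0 := inner_sub_projSet_nonpos hne hcl hconv x hq
  have hd : ‖x - p‖ = infDist x S := by rw [← dist_eq_norm, dist_projSet hne hcl hconv]
  have hexpand : ‖x - q‖ ^ 2 = ‖x - p‖ ^ 2 - 2 * ⟪x - p, q - p⟫ + ‖q - p‖ ^ 2 := by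
    rw [← norm_sub_sq_real]; congr 2; abel
  rw [hexpand, hd, norm_sub_rev]
  linarith

theorem lipschitzWith_projSet (hne : S.Nonempty) (hcl : IsClosed S) (hconv : Convex ℝ S) :
    LipschitzWith 1 (projSet S) := by
  refine LipschitzWith.of_dist_le_mul fun x y => ?_
  set p := projSet S x
  set q := projSet S y
  have hx : ⟪x - p, q - p⟫ ≤ 0 :=
    inner_sub_projSet_nonpos hne hcl hconv x (projSet_mem hne hcl hconv y)
  have hy : ⟪y - q, p - q⟫ ≤ 0 :=
    inner_sub_projSet_nonpos hne hcl hconv y (projSet_mem hne hcl hconv x)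
  have hx' : 0 ≤ ⟪x - p, p - q⟫ := by
    rw [← neg_sub q p, inner_neg_right]; linarith
  have hfirm : ‖p - q‖ ^ 2 ≤ ⟪x - y, p - q⟫ := by
    have hsplit : x - y = (x - p) - (y - q) + (p - q) := by abel
    rw [hsplit, inner_add_left, inner_sub_left, real_inner_self_eq_norm_sq]
    linarith
  have hcs : ⟪x - y, p - q⟫ ≤ ‖x - y‖ * ‖p - q‖ := real_inner_le_norm _ _
  rw [NNReal.coe_one, one_mul, dist_eq_norm, dist_eq_norm]
  nlinarith [norm_nonneg (p - q), norm_nonneg (x - y)]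

end Projection

section Cones

variable {E : Type*} [NormedAddCommGroup E] [InnerProductSpace ℝ E]

theorem smul_mem_coneOf {A : Set E} {c : ℝ} (hc : 0 ≤ c) {y : E} (hy : y ∈ coneOf A) :
    c • y ∈ coneOf A := by
  obtain ⟨c', hc', x, hx, rfl⟩ := hy
  exact ⟨c * c', mul_nonneg hc hc', x, hx, smul_smul c c' x⟩

theorem Convex.coneOf {A : Set E} (hA : Convex ℝ A) : Convex ℝ (coneOf A) := by
  rintro _ ⟨c₁, hc₁, x₁, hx₁, rfl⟩ _ ⟨c₂, hc₂, x₂, hx₂, rfl⟩ a b ha hb hab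
  rcases (add_nonneg (mul_nonneg ha hc₁) (mul_nonneg hb hc₂)).eq_or_lt with hc | hc
  · have h₁ : a * c₁ = 0 := by nlinarith [mul_nonneg ha hc₁, mul_nonneg hb hc₂]
    have h₂ : b * c₂ = 0 := by nlinarith [mul_nonneg ha hc₁, mul_nonneg hb hc₂]
    refine ⟨0, le_rfl, x₁, hx₁, ?_⟩
    simp [smul_smul, h₁, h₂]
  · -- renormalise the combination into a single point of `A`
    set c := a * c₁ + b * c₂
    refine ⟨c, hc.le, (a * c₁ / c) • x₁ + (b * c₂ / c) • x₂,
      hA hx₁ hx₂ (by positivity) (by positivity) (by rw [← add_div, div_self hc.ne']), ?_⟩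
    rw [smul_add, smul_smul, smul_smul, smul_smul, smul_smul]
    congr 2 <;> field_simp

variable {C : Set E} {x₀ : E}

theorem zero_mem_coneOf_feasible (hx₀ : x₀ ∈ C) : (0 : E) ∈ coneOf (feasible C x₀) :=
  ⟨0, le_rfl, 0, by simpa [feasible] using hx₀, (zero_smul ℝ _).symm⟩

theorem zero_mem_tangentConeOf (hx₀ : x₀ ∈ C) : (0 : E) ∈ tangentConeOf C x₀ :=
  subset_closure (zero_mem_coneOf_feasible hx₀)

theorem Convex.tangentConeOf (hconv : Convex ℝ C) : Convex ℝ (tangentConeOf C x₀) :=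
  (hconv.translate_preimage_right x₀).coneOf.closure

theorem smul_mem_tangentConeOf {c : ℝ} (hc : 0 ≤ c) {y : E} (hy : y ∈ tangentConeOf C x₀) :
    c • y ∈ tangentConeOf C x₀ :=
  map_mem_closure (continuous_const_smul c) hy fun _ hz => smul_mem_coneOf hc hz

theorem zero_mem_polarCone (K : Set E) : (0 : E) ∈ polarCone K := fun x _ => by simp

variable [CompleteSpace E]

/-- Moreau's decomposition: `w - projSet K w` lies in the polar cone and is orthogonal to
`projSet K w`. -/
theorem infDist_polarCone_eq_norm_projSet {K : Set E} (hne : K.Nonempty) (hcl : IsClosed K)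
    (hconv : Convex ℝ K) (hcone : ∀ c : ℝ, 0 ≤ c → ∀ y ∈ K, c • y ∈ K) (w : E) :
    infDist w (polarCone K) = ‖projSet K w‖ := by
  set p := projSet K w
  have hp : p ∈ K := projSet_mem hne hcl hconv w
  have horth : ⟪w - p, p⟫ = 0 := by
    have h0 := inner_sub_projSet_nonpos hne hcl hconv w (hcone 0 le_rfl p hp)
    have h2 := inner_sub_projSet_nonpos hne hcl hconv w (hcone 2 zero_le_two p hp)
    rw [zero_smul, zero_sub, inner_neg_right] at h0
    rw [show (2 : ℝ) • p - p = p by module] at h2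
    linarith
  have hpolar : w - p ∈ polarCone K := fun x hx => by
    have hvi := inner_sub_projSet_nonpos hne hcl hconv w hx
    rw [show x = (x - p) + p by abel, inner_add_right, horth]
    linarith
  refine le_antisymm ?_ ((le_infDist ⟨_, hpolar⟩).2 fun v hv => ?_)
  · calc infDist w (polarCone K) ≤ dist w (w - p) := infDist_le_dist_of_mem hpolar
      _ = ‖p‖ := by rw [dist_eq_norm, sub_sub_cancel]
  · have hexpand : ‖w - v‖ ^ 2 = ‖p‖ ^ 2 + 2 * ⟪p, (w - p) - v⟫ + ‖(w - p) - v‖ ^ 2 := by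
      rw [← norm_add_sq_real]; congr 2; abel
    have hcross : 0 ≤ ⟪p, (w - p) - v⟫ := by
      rw [inner_sub_right, real_inner_comm, horth, real_inner_comm]
      linarith [hv p hp]
    rw [dist_eq_norm]
    nlinarith [norm_nonneg p, norm_nonneg (w - v), sq_nonneg ‖(w - p) - v‖]

end Cones

section DifferenceQuotient

variable {E : Type*} [NormedAddCommGroup E] [InnerProductSpace ℝ E]

/-- The difference quotient `(projSet C (x₀ + σ w) - projSet C x₀) / σ` for `x₀ ∈ C`. -/
noncomputable def projDiffQuot (C : Set E) (x₀ w : E) (σ : ℝ) : E :=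
  σ⁻¹ • (projSet C (x₀ + σ • w) - x₀)

theorem norm_projDiffQuot (C : Set E) (x₀ w : E) (σ : ℝ) :
    ‖projDiffQuot C x₀ w σ‖ = ‖projSet C (x₀ + σ • w) - x₀‖ / |σ| := by
  rw [projDiffQuot, norm_smul, norm_inv, Real.norm_eq_abs, inv_mul_eq_div]

variable [CompleteSpace E] {C : Set E} {x₀ : E}

theorem continuous_projDiffQuot (hcl : IsClosed C) (hconv : Convex ℝ C) (hx₀ : x₀ ∈ C)
    (σ : ℝ) : Continuous fun w => projDiffQuot C x₀ w σ := by
  have hproj := (lipschitzWith_projSet ⟨x₀, hx₀⟩ hcl hconv).continuous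
  unfold projDiffQuot
  fun_prop

theorem norm_projDiffQuot_le (hcl : IsClosed C) (hconv : Convex ℝ C) (hx₀ : x₀ ∈ C)
    (w : E) (σ : ℝ) : ‖projDiffQuot C x₀ w σ‖ ≤ ‖w‖ := by
  have hlip := (lipschitzWith_projSet ⟨x₀, hx₀⟩ hcl hconv).dist_le_mul (x₀ + σ • w) x₀
  rw [projSet_of_mem hx₀, NNReal.coe_one, one_mul, dist_eq_norm, dist_eq_norm,
    add_sub_cancel_left, norm_smul, Real.norm_eq_abs] at hlip
  rw [norm_projDiffQuot]
  rcases (abs_nonneg σ).eq_or_lt with hσ | hσ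
  · rw [← hσ, div_zero]; exact norm_nonneg w
  · rwa [div_le_iff₀ hσ, mul_comm]

theorem projDiffQuot_mem_coneOf (hcl : IsClosed C) (hconv : Convex ℝ C) (hx₀ : x₀ ∈ C)
    (w : E) {σ : ℝ} (hσ : 0 < σ) : projDiffQuot C x₀ w σ ∈ coneOf (feasible C x₀) := by
  refine ⟨σ⁻¹, inv_nonneg.2 hσ.le, _, ?_, rfl⟩
  show x₀ + (projSet C (x₀ + σ • w) - x₀) ∈ C
  rw [add_sub_cancel]
  exact projSet_mem ⟨x₀, hx₀⟩ hcl hconv _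

theorem norm_sub_projDiffQuot (hcl : IsClosed C) (hconv : Convex ℝ C) (hx₀ : x₀ ∈ C)
    (w : E) {σ : ℝ} (hσ : 0 < σ) :
    ‖w - projDiffQuot C x₀ w σ‖ = σ⁻¹ * infDist (x₀ + σ • w) C := by
  have hscale : w - projDiffQuot C x₀ w σ = σ⁻¹ • (x₀ + σ • w - projSet C (x₀ + σ • w)) := by
    unfold projDiffQuot
    simp only [smul_sub, smul_add, inv_smul_smul₀ hσ.ne']
    abel
  rw [hscale, norm_smul, norm_inv, Real.norm_of_nonneg hσ.le, ← dist_eq_norm,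
    dist_projSet ⟨x₀, hx₀⟩ hcl hconv]

end DifferenceQuotient

section SmallNoiseLimit

variable {E : Type*} [NormedAddCommGroup E] [InnerProductSpace ℝ E] [CompleteSpace E]
  {C : Set E} {x₀ : E}

theorem eventually_norm_sub_projDiffQuot_le (hcl : IsClosed C) (hconv : Convex ℝ C)
    (hx₀ : x₀ ∈ C) (w : E) {u : E} (hu : u ∈ coneOf (feasible C x₀)) :
    ∀ᶠ σ in 𝓝[>] (0 : ℝ), ‖w - projDiffQuot C x₀ w σ‖ ≤ dist w u := by
  obtain ⟨c, hc, z, hz, rfl⟩ := hu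
  have hsmall : ∀ᶠ σ in 𝓝[>] (0 : ℝ), σ * c < 1 := by
    have h : Tendsto (fun σ : ℝ => σ * c) (𝓝[>] 0) (𝓝 0) := by
      simpa using (tendsto_id.mul_const c).mono_left (nhdsWithin_le_nhds (a := (0 : ℝ)))
    exact h.eventually (eventually_lt_nhds one_pos)
  filter_upwards [self_mem_nhdsWithin, hsmall] with σ (hσ : 0 < σ) hσc
  -- `x₀ + σ • (c • z)` is a point of the segment from `x₀` to `x₀ + z`
  have hmem : x₀ + σ • c • z ∈ C := by
    rw [smul_smul]
    exact hconv.add_smul_mem hx₀ hz ⟨by positivity, hσc.le⟩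
  rw [norm_sub_projDiffQuot hcl hconv hx₀ w hσ, inv_mul_le_iff₀ hσ]
  calc infDist (x₀ + σ • w) C ≤ dist (x₀ + σ • w) (x₀ + σ • c • z) := infDist_le_dist_of_mem hmem
    _ = σ * dist w (c • z) := by
      rw [dist_add_left, dist_smul₀, Real.norm_of_nonneg hσ.le]

theorem tendsto_norm_sub_projDiffQuot (hcl : IsClosed C) (hconv : Convex ℝ C) (hx₀ : x₀ ∈ C)
    (w : E) : Tendsto (fun σ => ‖w - projDiffQuot C x₀ w σ‖) (𝓝[>] 0)
      (𝓝 (infDist w (tangentConeOf C x₀))) := by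
  refine tendsto_order.2 ⟨fun a ha => ?_, fun a ha => ?_⟩
  · filter_upwards [self_mem_nhdsWithin] with σ (hσ : 0 < σ)
    refine ha.trans_le ?_
    rw [← dist_eq_norm]
    exact infDist_le_dist_of_mem (subset_closure (projDiffQuot_mem_coneOf hcl hconv hx₀ w hσ))
  · rw [tangentConeOf, infDist_closure] at ha
    obtain ⟨u, hu, hua⟩ := (infDist_lt_iff ⟨0, zero_mem_coneOf_feasible hx₀⟩).1 ha
    filter_upwards [eventually_norm_sub_projDiffQuot_le hcl hconv hx₀ w hu] with σ hσ
    exact hσ.trans_lt hua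

theorem tendsto_projDiffQuot (hcl : IsClosed C) (hconv : Convex ℝ C) (hx₀ : x₀ ∈ C) (w : E) :
    Tendsto (projDiffQuot C x₀ w) (𝓝[>] 0) (𝓝 (projSet (tangentConeOf C x₀) w)) := by
  set T := tangentConeOf C x₀
  have hT : T.Nonempty := ⟨0, zero_mem_tangentConeOf hx₀⟩
  have hgap : Tendsto (fun σ => ‖w - projDiffQuot C x₀ w σ‖ ^ 2 - infDist w T ^ 2)
      (𝓝[>] 0) (𝓝 0) := by
    have h := ((tendsto_norm_sub_projDiffQuot hcl hconv hx₀ w).pow 2).sub_const (infDist w T ^ 2)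
    rwa [sub_self] at h
  have hsq : Tendsto (fun σ => ‖projSet T w - projDiffQuot C x₀ w σ‖ ^ 2) (𝓝[>] 0) (𝓝 0) := by
    refine squeeze_zero' (Eventually.of_forall fun σ => sq_nonneg _) ?_ hgap
    filter_upwards [self_mem_nhdsWithin] with σ (hσ : 0 < σ)
    exact norm_projSet_sub_sq_le hT isClosed_closure hconv.tangentConeOf w
      (subset_closure (projDiffQuot_mem_coneOf hcl hconv hx₀ w hσ))
  rw [tendsto_iff_norm_sub_tendsto_zero]
  simpa [norm_sub_rev, Real.sqrt_sq (norm_nonneg _)] using hsq.sqrt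

theorem tendsto_norm_projDiffQuot (hcl : IsClosed C) (hconv : Convex ℝ C) (hx₀ : x₀ ∈ C)
    (w : E) : Tendsto (fun σ => ‖projDiffQuot C x₀ w σ‖) (𝓝[>] 0)
      (𝓝 (infDist w (polarCone (tangentConeOf C x₀)))) := by
  rw [infDist_polarCone_eq_norm_projSet ⟨0, zero_mem_tangentConeOf hx₀⟩ isClosed_closure
    hconv.tangentConeOf (fun c hc y hy => smul_mem_tangentConeOf hc hy)]
  exact (tendsto_projDiffQuot hcl hconv hx₀ w).norm

end SmallNoiseLimit

section Monotonicity

variable {E : Type*} [NormedAddCommGroup E] [InnerProductSpace ℝ E] [CompleteSpace E]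
  {C : Set E} {x₀ : E}

theorem antitoneOn_norm_projDiffQuot (hcl : IsClosed C) (hconv : Convex ℝ C) (hx₀ : x₀ ∈ C)
    (w : E) : AntitoneOn (fun σ => ‖projDiffQuot C x₀ w σ‖) (Set.Ioi 0) := by
  intro σ₁ (hσ₁ : 0 < σ₁) σ₂ (hσ₂ : 0 < σ₂) h12
  have hne : C.Nonempty := ⟨x₀, hx₀⟩
  have h₁ := inner_sub_projSet_nonpos hne hcl hconv (x₀ + σ₁ • w)
    (projSet_mem hne hcl hconv (x₀ + σ₂ • w))
  have h₂ := inner_sub_projSet_nonpos hne hcl hconv (x₀ + σ₂ • w)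
    (projSet_mem hne hcl hconv (x₀ + σ₁ • w))
  show ‖projDiffQuot C x₀ w σ₂‖ ≤ ‖projDiffQuot C x₀ w σ₁‖
  rw [norm_projDiffQuot, norm_projDiffQuot, abs_of_pos hσ₁, abs_of_pos hσ₂,
    div_le_div_iff₀ hσ₂ hσ₁]
  obtain ⟨u₁, hu₁⟩ : ∃ u, projSet C (x₀ + σ₁ • w) = x₀ + u := ⟨_, (add_sub_cancel x₀ _).symm⟩
  obtain ⟨u₂, hu₂⟩ : ∃ u, projSet C (x₀ + σ₂ • w) = x₀ + u := ⟨_, (add_sub_cancel x₀ _).symm⟩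
  simp only [hu₁, hu₂, add_sub_add_left_eq_sub, add_sub_cancel_left] at h₁ h₂ ⊢
  -- `σ₂ h₁ + σ₁ h₂` eliminates `w`
  have hkey : σ₂ * ‖u₁‖ ^ 2 + σ₁ * ‖u₂‖ ^ 2 ≤ (σ₁ + σ₂) * ⟪u₁, u₂⟫ := by
    simp only [inner_sub_left, inner_sub_right, real_inner_smul_left, real_inner_self_eq_norm_sq,
      real_inner_comm u₁ u₂] at h₁ h₂
    nlinarith
  have hcs : (σ₁ + σ₂) * ⟪u₁, u₂⟫ ≤ (σ₁ + σ₂) * (‖u₁‖ * ‖u₂‖) :=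
    mul_le_mul_of_nonneg_left (real_inner_le_norm u₁ u₂) (by positivity)
  by_contra! hlt
  have hlt' : ‖u₁‖ < ‖u₂‖ := by nlinarith [norm_nonneg u₁]
  nlinarith [mul_pos (sub_pos.2 hlt) (sub_pos.2 hlt')]

theorem norm_projDiffQuot_le_infDist_polarCone (hcl : IsClosed C) (hconv : Convex ℝ C)
    (hx₀ : x₀ ∈ C) (w : E) {σ : ℝ} (hσ : 0 < σ) :
    ‖projDiffQuot C x₀ w σ‖ ≤ infDist w (polarCone (tangentConeOf C x₀)) := by
  refine ge_of_tendsto (tendsto_norm_projDiffQuot hcl hconv hx₀ w) ?_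
  filter_upwards [Ioc_mem_nhdsGT hσ] with σ' hσ'
  exact antitoneOn_norm_projDiffQuot hcl hconv hx₀ w hσ'.1 hσ hσ'.2

end Monotonicity

section Integration

variable {E : Type*} [NormedAddCommGroup E] [InnerProductSpace ℝ E] [MeasurableSpace E]

theorem integral_norm_projSet_sub_sq_div_sq (C : Set E) (x₀ : E) (μ : Measure E) (σ : ℝ) :
    (∫ w, ‖projSet C (x₀ + σ • w) - x₀‖ ^ 2 ∂μ) / σ ^ 2
      = ∫ w, ‖projDiffQuot C x₀ w σ‖ ^ 2 ∂μ := by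
  rw [← integral_div]
  simp_rw [norm_projDiffQuot, div_pow, sq_abs]

variable [BorelSpace E] {μ : Measure E}

theorem integrable_infDist_polarCone_sq (K : Set E) (hμ : Integrable (fun w => ‖w‖ ^ 2) μ) :
    Integrable (fun w => infDist w (polarCone K) ^ 2) μ := by
  refine hμ.mono' ((continuous_infDist_pt _).pow 2).aestronglyMeasurable
    (ae_of_all _ fun w => ?_)
  have h : infDist w (polarCone K) ≤ ‖w‖ := by
    simpa using infDist_le_dist_of_mem (x := w) (zero_mem_polarCone K)
  rw [Real.norm_of_nonneg (sq_nonneg _)]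
  exact pow_le_pow_left₀ infDist_nonneg h 2

variable [CompleteSpace E] {C : Set E} {x₀ : E}

theorem integrable_norm_projDiffQuot_sq (hcl : IsClosed C) (hconv : Convex ℝ C) (hx₀ : x₀ ∈ C)
    (hμ : Integrable (fun w => ‖w‖ ^ 2) μ) (σ : ℝ) :
    Integrable (fun w => ‖projDiffQuot C x₀ w σ‖ ^ 2) μ := by
  refine hμ.mono' ((continuous_projDiffQuot hcl hconv hx₀ σ).norm.pow 2).aestronglyMeasurable
    (ae_of_all _ fun w => ?_)
  rw [Real.norm_of_nonneg (sq_nonneg _)]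
  exact pow_le_pow_left₀ (norm_nonneg _) (norm_projDiffQuot_le hcl hconv hx₀ w σ) 2

theorem integral_norm_projDiffQuot_sq_le (hcl : IsClosed C) (hconv : Convex ℝ C)
    (hx₀ : x₀ ∈ C) (hμ : Integrable (fun w => ‖w‖ ^ 2) μ) {σ : ℝ} (hσ : 0 < σ) :
    ∫ w, ‖projDiffQuot C x₀ w σ‖ ^ 2 ∂μ
      ≤ ∫ w, infDist w (polarCone (tangentConeOf C x₀)) ^ 2 ∂μ :=
  integral_mono (integrable_norm_projDiffQuot_sq hcl hconv hx₀ hμ σ)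
    (integrable_infDist_polarCone_sq _ hμ) fun w =>
      pow_le_pow_left₀ (norm_nonneg _) (norm_projDiffQuot_le_infDist_polarCone hcl hconv hx₀ w hσ) 2

theorem tendsto_integral_norm_projDiffQuot_sq (hcl : IsClosed C) (hconv : Convex ℝ C)
    (hx₀ : x₀ ∈ C) (hμ : Integrable (fun w => ‖w‖ ^ 2) μ) :
    Tendsto (fun σ => ∫ w, ‖projDiffQuot C x₀ w σ‖ ^ 2 ∂μ) (𝓝[>] 0)
      (𝓝 (∫ w, infDist w (polarCone (tangentConeOf C x₀)) ^ 2 ∂μ)) := by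
  refine tendsto_integral_filter_of_dominated_convergence _
    (Eventually.of_forall fun σ =>
      ((continuous_projDiffQuot hcl hconv hx₀ σ).norm.pow 2).aestronglyMeasurable)
    (Eventually.of_forall fun σ => ae_of_all _ fun w => ?_) hμ
    (ae_of_all _ fun w => (tendsto_norm_projDiffQuot hcl hconv hx₀ w).pow 2)
  rw [Real.norm_of_nonneg (sq_nonneg _)]
  exact pow_le_pow_left₀ (norm_nonneg _) (norm_projDiffQuot_le hcl hconv hx₀ w σ) 2

end Integration

theorem stdGaussian_eq_probabilityTheory_stdGaussian (n : ℕ) :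
    stdGaussian n = ProbabilityTheory.stdGaussian (EuclideanSpace ℝ (Fin n)) :=
  map_pi_eq_stdGaussian

theorem integrable_norm_sq_stdGaussian (n : ℕ) :
    Integrable (fun w => ‖w‖ ^ 2) (stdGaussian n) := by
  rw [stdGaussian_eq_probabilityTheory_stdGaussian]
  exact IsGaussian.memLp_two_id.integrable_norm_pow two_ne_zero

theorem statement1_general {n : ℕ} (C : Set (EuclideanSpace ℝ (Fin n)))
    (hCcl : IsClosed C) (hCconv : Convex ℝ C)
    (x₀ : EuclideanSpace ℝ (Fin n)) (hx₀ : x₀ ∈ C) :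
    IsLUB {e : ℝ | ∃ σ : ℝ, 0 < σ ∧
        e = (∫ w, ‖projSet C (x₀ + σ • w) - x₀‖ ^ 2 ∂(stdGaussian n)) / σ ^ 2}
      (msd n (polarCone (tangentConeOf C x₀))) ∧
    Tendsto
      (fun σ : ℝ => (∫ w, ‖projSet C (x₀ + σ • w) - x₀‖ ^ 2 ∂(stdGaussian n)) / σ ^ 2)
      (nhdsWithin 0 (Set.Ioi 0)) (nhds (msd n (polarCone (tangentConeOf C x₀)))) := by
  have hμ := integrable_norm_sq_stdGaussian n
  simp_rw [integral_norm_projSet_sub_sq_div_sq]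
  have hlim := tendsto_integral_norm_projDiffQuot_sq hCcl hCconv hx₀ hμ
  refine ⟨⟨?_, fun b hb => ?_⟩, hlim⟩
  · rintro _ ⟨σ, hσ, rfl⟩
    exact integral_norm_projDiffQuot_sq_le hCcl hCconv hx₀ hμ hσ
  · refine le_of_tendsto hlim ?_
    filter_upwards [self_mem_nhdsWithin] with σ hσ
    exact hb ⟨σ, hσ, rfl⟩

/-- Constrained denoising.
For a nonempty closed convex `C ∋ x₀` and standard Gaussian noise, the supremum over
`σ > 0` of the normalized MSE of the metric projection onto `C` equals
`D(T_C(x₀)*)`, and it is attained in the limit `σ → 0`. -/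
theorem statement1 {n : ℕ} (C : Set (EuclideanSpace ℝ (Fin n)))
    (hCne : C.Nonempty) (hCcl : IsClosed C) (hCconv : Convex ℝ C)
    (x₀ : EuclideanSpace ℝ (Fin n)) (hx₀ : x₀ ∈ C) :
    IsLUB {e : ℝ | ∃ σ : ℝ, 0 < σ ∧
        e = (∫ w, ‖projSet C (x₀ + σ • w) - x₀‖ ^ 2 ∂(stdGaussian n)) / σ ^ 2}
      (msd n (polarCone (tangentConeOf C x₀))) ∧
    Tendsto
      (fun σ : ℝ => (∫ w, ‖projSet C (x₀ + σ • w) - x₀‖ ^ 2 ∂(stdGaussian n)) / σ ^ 2)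
      (nhdsWithin 0 (Set.Ioi 0)) (nhds (msd n (polarCone (tangentConeOf C x₀)))) :=
  statement1_general C hCcl hCconv x₀ hx₀
end

section
/- Let f : ℝⁿ → ℝ be a convex function, C ⊆ ℝⁿ a nonempty, closed and convex set, x₀ ∈ C, τ ≥ 0, z ∈ ℝⁿ, and y = x₀ + z. Let x* be the unique minimizer over x ∈ C of τ f(x) + (1/2)‖y − x‖₂², and set w* = x* − x₀. Then ‖w*‖₂ ≤ dist(z, τ∂f(x₀) + T_C(x₀)*), where the sum is a Minkowski sum and the set τ∂f(x₀) + T_C(x₀)* is closed. -/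
open MeasureTheory ProbabilityTheory Filter Topology Metric
open scoped RealInnerProductSpace ENNReal Pointwise Matrix

/-- Borel/product measurable structure on real matrices. -/
instance matrixMeasurableSpace {m n : ℕ} : MeasurableSpace (Matrix (Fin m) (Fin n) ℝ) :=
  (inferInstance : MeasurableSpace (Fin m → Fin n → ℝ))

/-!
The optimality condition of the proximal problem, tested against `x₀ ∈ C`, gives
`τ (f x* - f x₀) ≤ ⟪z - w*, w*⟫`. For `u = τ s + v` with `s ∈ ∂f(x₀)` and `v` in the polar of the
tangent cone (which contains `w*`), the subgradient inequality and `⟪v, w*⟫ ≤ 0` turn this into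
`‖w*‖² ≤ ⟪z - u, w*⟫ ≤ ‖z - u‖ ‖w*‖`. The Minkowski sum is closed because `∂f(x₀)` is compact
(a finite convex function is continuous, hence locally bounded), and it is nonempty because a
supporting hyperplane of the strict epigraph at `(x₀, f x₀)` yields a subgradient.
-/

section

variable {E : Type*} [NormedAddCommGroup E] [InnerProductSpace ℝ E]

theorem isClosed_subdiff (f : E → ℝ) (x₀ : E) : IsClosed (subdiff f x₀) := by
  simp only [subdiff, Set.ofPred_forall]
  exact isClosed_iInter fun x => isClosed_le (by fun_prop) continuous_const

theorem isClosed_polarCone (K : Set E) : IsClosed (polarCone K) := by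
  simp only [polarCone, Set.ofPred_forall]
  exact isClosed_iInter fun x => isClosed_iInter fun _ => isClosed_le (by fun_prop) continuous_const

theorem norm_le_of_mem_subdiff {f : E → ℝ} {x₀ s : E} {M : ℝ}
    (hM : ∀ u, ‖u‖ ≤ 1 → f (x₀ + u) ≤ f x₀ + M) (hs : s ∈ subdiff f x₀) : ‖s‖ ≤ M := by
  have hu : ‖‖s‖⁻¹ • s‖ ≤ 1 := by
    rw [norm_smul, norm_inv, norm_norm]
    exact inv_mul_le_one_of_le₀ le_rfl (norm_nonneg _)
  have hsu : ⟪s, ‖s‖⁻¹ • s⟫ = ‖s‖ := by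
    rw [real_inner_smul_right, real_inner_self_eq_norm_sq]
    rcases eq_or_ne ‖s‖ 0 with h | h
    · simp [h]
    · field_simp
  have := hs (x₀ + ‖s‖⁻¹ • s)
  rw [add_sub_cancel_left, hsu] at this
  linarith [hM _ hu]

theorem isCompact_subdiff [ProperSpace E] {f : E → ℝ} (hf : Continuous f) (x₀ : E) :
    IsCompact (subdiff f x₀) := by
  obtain ⟨M, hM⟩ := (isCompact_closedBall x₀ 1).bddAbove_image hf.continuousOn
  refine (isCompact_closedBall 0 (M - f x₀)).of_isClosed_subset (isClosed_subdiff f x₀) ?_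
  intro s hs
  rw [mem_closedBall_zero_iff]
  refine norm_le_of_mem_subdiff (fun u hu => ?_) hs
  have : f (x₀ + u) ≤ M := hM ⟨x₀ + u, by simpa [dist_eq_norm] using hu, rfl⟩
  linarith

theorem ConvexOn.exists_strongDual_le_sub {F : Type*} [NormedAddCommGroup F] [NormedSpace ℝ F]
    {f : F → ℝ} (hf : ConvexOn ℝ Set.univ f) (hc : Continuous f) (x₀ : F) :
    ∃ L : StrongDual ℝ F, ∀ x, L (x - x₀) ≤ f x - f x₀ := by
  obtain ⟨φ, hφ⟩ := geometric_hahn_banach_open_point (x := (x₀, f x₀)) hf.convex_strict_epigraph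
    (by simpa only [Set.mem_univ, true_and] using
      isOpen_lt (f := fun p : F × ℝ => f p.1) (by fun_prop) continuous_snd)
    (by simp)
  set c := φ (0, 1)
  have hsplit : ∀ x t, φ (x, t) = φ (x, 0) + t * c := by
    intro x t
    rw [← smul_eq_mul, ← map_smul, ← map_add]
    simp
  have hsep : ∀ x t, f x < t → φ (x, 0) + t * c < φ (x₀, 0) + f x₀ * c := by
    intro x t ht
    simpa only [← hsplit] using hφ (x, t) ⟨trivial, ht⟩
  have hc : c < 0 := by linarith [hsep x₀ (f x₀ + 1) (lt_add_one _)]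
  have hsupp : ∀ x, φ (x, 0) + f x * c ≤ φ (x₀, 0) + f x₀ * c := by
    intro x
    have hlim : Tendsto (fun t => φ (x, 0) + t * c) (𝓝[>] f x) (𝓝 (φ (x, 0) + f x * c)) :=
      ((continuous_const.add (continuous_id.mul continuous_const)).tendsto _).mono_left
        nhdsWithin_le_nhds
    exact le_of_tendsto hlim (eventually_nhdsWithin_of_forall fun t ht => (hsep x t ht).le)
  refine ⟨(-c)⁻¹ • φ.comp (ContinuousLinearMap.inl ℝ F ℝ), fun x => ?_⟩
  rw [map_sub]
  simp only [smul_apply, ContinuousLinearMap.comp_apply,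
    ContinuousLinearMap.inl_apply, smul_eq_mul, ← mul_sub]
  rw [inv_mul_le_iff₀ (neg_pos.2 hc)]
  linarith [hsupp x]

theorem subdiff_nonempty [CompleteSpace E] {f : E → ℝ} (hf : ConvexOn ℝ Set.univ f)
    (hc : Continuous f) (x₀ : E) : (subdiff f x₀).Nonempty := by
  obtain ⟨L, hL⟩ := hf.exists_strongDual_le_sub hc x₀
  refine ⟨(InnerProductSpace.toDual ℝ E).symm L, fun x => ?_⟩
  rw [InnerProductSpace.toDual_symm_apply]
  linarith [hL x]

theorem nonpos_of_forall_le_mul {a b : ℝ} (h : ∀ t, 0 < t → t ≤ 1 → a ≤ t * b) : a ≤ 0 := by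
  have hlim : Tendsto (fun t => t * b) (𝓝[>] 0) (𝓝 0) := by
    simpa using ((tendsto_id (x := 𝓝 (0 : ℝ))).mul_const b).mono_left nhdsWithin_le_nhds
  exact ge_of_tendsto hlim (Filter.mem_of_superset (Ioc_mem_nhdsGT zero_lt_one)
    fun t ht => h t ht.1 ht.2)

theorem IsMinOn.sub_le_inner_of_convexOn {C : Set E} {g : E → ℝ} {y xs x : E} (hC : Convex ℝ C)
    (hg : ConvexOn ℝ C g) (hmin : IsMinOn (fun x => g x + (1 / 2) * ‖y - x‖ ^ 2) C xs)
    (hxs : xs ∈ C) (hx : x ∈ C) : g xs - g x ≤ ⟪y - xs, xs - x⟫ := by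
  set d := x - xs
  suffices g xs - g x - ⟪y - xs, xs - x⟫ ≤ 0 by linarith
  refine nonpos_of_forall_le_mul (b := ‖d‖ ^ 2 / 2) fun t ht0 ht1 => ?_
  have hmem : (1 - t) • xs + t • x ∈ C := hC hxs hx (by linarith) ht0.le (by ring)
  have hconv := hg.2 hxs hx (by linarith : 0 ≤ 1 - t) ht0.le (by ring)
  have hle := isMinOn_iff.mp hmin _ hmem
  have hpt : y - ((1 - t) • xs + t • x) = (y - xs) - t • d := by module
  have hnorm : ‖(y - xs) - t • d‖ ^ 2 = ‖y - xs‖ ^ 2 - 2 * t * ⟪y - xs, d⟫ + t ^ 2 * ‖d‖ ^ 2 := by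
    rw [norm_sub_sq_real, real_inner_smul_right, norm_smul, mul_pow, Real.norm_eq_abs, sq_abs]
    ring
  have hd : ⟪y - xs, xs - x⟫ = -⟪y - xs, d⟫ := by rw [← inner_neg_right, neg_sub]
  simp only [smul_eq_mul] at hconv
  rw [hpt, hnorm] at hle
  have : t * (g xs - g x - ⟪y - xs, xs - x⟫) ≤ t * (t * (‖d‖ ^ 2 / 2)) := by
    rw [hd]; linarith
  exact le_of_mul_le_mul_left this ht0

theorem norm_le_of_sq_le_inner {w a : E} (h : ‖w‖ ^ 2 ≤ ⟪a, w⟫) : ‖w‖ ≤ ‖a‖ := by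
  have := h.trans (real_inner_le_norm a w)
  nlinarith [norm_nonneg w, norm_nonneg a]

theorem norm_le_dist_of_mem_smul_subdiff_add_polarCone {f : E → ℝ} {K : Set E} {x₀ w z u : E}
    {τ : ℝ} (hτ : 0 ≤ τ) (hw : w ∈ K) (hvar : τ * f (x₀ + w) - τ * f x₀ ≤ ⟪z - w, w⟫)
    (hu : u ∈ τ • subdiff f x₀ + polarCone K) : ‖w‖ ≤ dist z u := by
  obtain ⟨_, ⟨s, hs, rfl⟩, v, hv, rfl⟩ := hu
  have hsw : τ * ⟪s, w⟫ ≤ τ * f (x₀ + w) - τ * f x₀ := by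
    have := mul_le_mul_of_nonneg_left (hs (x₀ + w)) hτ
    rw [add_sub_cancel_left] at this
    linarith
  have hvw : ⟪v, w⟫ ≤ 0 := hv w hw
  rw [dist_eq_norm]
  apply norm_le_of_sq_le_inner
  rw [inner_sub_left, inner_add_left, real_inner_smul_left]
  rw [inner_sub_left, real_inner_self_eq_norm_sq] at hvar
  linarith

end

theorem statement7_general {n : ℕ} (f : EuclideanSpace ℝ (Fin n) → ℝ)
    (hf : ConvexOn ℝ Set.univ f)
    (C : Set (EuclideanSpace ℝ (Fin n)))
    (hCconv : Convex ℝ C)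
    (x₀ : EuclideanSpace ℝ (Fin n)) (hx₀ : x₀ ∈ C)
    (τ : ℝ) (hτ : 0 ≤ τ) (z : EuclideanSpace ℝ (Fin n))
    (xstar : EuclideanSpace ℝ (Fin n)) (hmem : xstar ∈ C)
    (hmin : IsMinOn (fun x => τ * f x + (1 / 2) * ‖(x₀ + z) - x‖ ^ 2) C xstar) :
    ‖xstar - x₀‖ ≤
      Metric.infDist z (τ • subdiff f x₀ + polarCone (tangentConeOf C x₀)) ∧
    IsClosed (τ • subdiff f x₀ + polarCone (tangentConeOf C x₀)) := by
  have hcont : Continuous f := continuousOn_univ.mp (hf.continuousOn isOpen_univ)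
  have hne : (τ • subdiff f x₀ + polarCone (tangentConeOf C x₀)).Nonempty :=
    (subdiff_nonempty hf hcont x₀).smul_set.add ⟨0, fun _ _ => by simp⟩
  have htan : xstar - x₀ ∈ tangentConeOf C x₀ :=
    subset_closure ⟨1, zero_le_one, xstar - x₀, by simpa [feasible] using hmem, (one_smul _ _).symm⟩
  have hvar := hmin.sub_le_inner_of_convexOn (g := fun x => τ * f x) hCconv
    ((hf.smul hτ).subset (Set.subset_univ C) hCconv) hmem hx₀
  refine ⟨(le_infDist hne).2 fun u hu =>
    norm_le_dist_of_mem_smul_subdiff_add_polarCone hτ htan ?_ hu, ?_⟩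
  · have hy : x₀ + z - xstar = z - (xstar - x₀) := by abel
    rwa [add_sub_cancel, ← hy]
  · exact (isClosed_polarCone _).add_left_of_isCompact ((isCompact_subdiff hcont x₀).smul τ)

/-- Deterministic error upper bound.
If `x*` minimizes `τ f(x) + ½‖(x₀+z) − x‖²` over `C`, then
`‖x* − x₀‖ ≤ dist(z, τ∂f(x₀) + T_C(x₀)*)`, and the Minkowski sum
`τ∂f(x₀) + T_C(x₀)*` is a closed set. -/
theorem statement7 {n : ℕ} (f : EuclideanSpace ℝ (Fin n) → ℝ)
    (hf : ConvexOn ℝ Set.univ f)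
    (C : Set (EuclideanSpace ℝ (Fin n)))
    (hCne : C.Nonempty) (hCcl : IsClosed C) (hCconv : Convex ℝ C)
    (x₀ : EuclideanSpace ℝ (Fin n)) (hx₀ : x₀ ∈ C)
    (τ : ℝ) (hτ : 0 ≤ τ) (z : EuclideanSpace ℝ (Fin n))
    (xstar : EuclideanSpace ℝ (Fin n)) (hmem : xstar ∈ C)
    (hmin : IsMinOn (fun x => τ * f x + (1 / 2) * ‖(x₀ + z) - x‖ ^ 2) C xstar) :
    ‖xstar - x₀‖ ≤
      Metric.infDist z (τ • subdiff f x₀ + polarCone (tangentConeOf C x₀)) ∧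
    IsClosed (τ • subdiff f x₀ + polarCone (tangentConeOf C x₀)) :=
  statement7_general f hf C hCconv x₀ hx₀ τ hτ z xstar hmem hmin
end
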